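/- Let $\Omega \subseteq \{\lambda \in \mathbb{C} : \operatorname{Re}\lambda \le -1\}$ be nonempty, let $(\alpha_k)_{k \in \mathbb{Z}}$ be a sequence in $\Omega$, and let $A$ act on $X = \ell^p(\mathbb{Z}; \mathbb{C})$, $1 \le p \le \infty$, by $A(x_k) = (x_{k-1} + \alpha_k x_k)$. Then for every $\lambda \in \mathbb{C}$ with $\operatorname{dist}(\lambda, \Omega) > 1$, the operator $\lambda - A$ is invertible and $\|(\lambda - A)^{-1}\| \le \big(\operatorname{dist}(\lambda, \Omega) - 1\big)^{-1}$. -/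

import Mathlib

/-!
Write `λ - A = M (1 - M⁻¹ S)`, where `S` is the right shift and `M` multiplies the `k`-th
coordinate by `λ - α_k`. Since `|λ - α_k| ≥ d := dist(λ, Ω) > 1`, the diagonal operator `M⁻¹`
has norm at most `d⁻¹ < 1` while `S` is an isometry, so `1 - M⁻¹ S` is inverted by its Neumann
series and `(λ - A)⁻¹ = (∑ₙ (M⁻¹ S)ⁿ) M⁻¹` has norm at most `d⁻¹ / (1 - d⁻¹) = (d - 1)⁻¹`.
-/

open scoped ENNReal

namespace lp

variable {ι ι' 𝕜 E : Type*} [NormedAddCommGroup E] {p : ℝ≥0∞}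

theorem _root_.Memℓp.comp_equiv {f : ι → E} (hf : Memℓp f p) (e : ι' ≃ ι) :
    Memℓp (f ∘ e) p := by
  obtain rfl | rfl | hp := p.trichotomy
  · exact memℓp_zero (hf.finite_dsupport.preimage e.injective.injOn)
  · exact memℓp_infty ((e.surjective.range_comp fun i => ‖f i‖).symm ▸ hf.bddAbove)
  · exact memℓp_gen (e.summable_iff.2 (hf.summable hp))

variable [NontriviallyNormedField 𝕜] [NormedSpace 𝕜 E] [Fact (1 ≤ p)]

variable (𝕜 E p) in
noncomputable def compEquivₗᵢ (e : ι' ≃ ι) :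
    lp (fun _ : ι => E) p →ₗᵢ[𝕜] lp (fun _ : ι' => E) p where
  toFun x := ⟨x ∘ e, (lp.memℓp x).comp_equiv e⟩
  map_add' _ _ := rfl
  map_smul' _ _ := rfl
  norm_map' x := by
    obtain rfl | hp := eq_or_ne p ∞
    · exact e.iSup_comp (g := fun i => ‖x i‖)
    · have hp : 0 < p.toReal := ENNReal.toReal_pos (zero_lt_one.trans_le Fact.out).ne' hp
      rw [norm_eq_tsum_rpow hp, norm_eq_tsum_rpow hp]
      exact congrArg (· ^ _) (e.tsum_eq fun i => ‖x i‖ ^ p.toReal)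

@[simp]
theorem compEquivₗᵢ_apply (e : ι' ≃ ι) (x : lp (fun _ : ι => E) p) (i : ι') :
    compEquivₗᵢ 𝕜 E p e x i = x (e i) := rfl

variable (𝕜 E p) in
noncomputable def shiftCLM : lp (fun _ : ℤ => E) p →L[𝕜] lp (fun _ : ℤ => E) p :=
  (compEquivₗᵢ 𝕜 E p (Equiv.subRight 1)).toContinuousLinearMap

@[simp]
theorem shiftCLM_apply (x : lp (fun _ : ℤ => E) p) (k : ℤ) :
    shiftCLM 𝕜 E p x k = x (k - 1) := rfl

theorem norm_shiftCLM_le : ‖shiftCLM 𝕜 E p‖ ≤ 1 :=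
  LinearIsometry.norm_toContinuousLinearMap_le _

variable (p) in
noncomputable def diagCLM (β : ι → 𝕜) {r : ℝ} (hr : 0 ≤ r) (hβ : ∀ i, ‖β i‖ ≤ r) :
    lp (fun _ : ι => 𝕜) p →L[𝕜] lp (fun _ : ι => 𝕜) p :=
  mapCLM p (fun i => ContinuousLinearMap.mul 𝕜 𝕜 (β i)) hr fun i =>
    (ContinuousLinearMap.opNorm_mul_apply_le _ _ _).trans (hβ i)

@[simp]
theorem diagCLM_apply (β : ι → 𝕜) {r : ℝ} (hr : 0 ≤ r) (hβ : ∀ i, ‖β i‖ ≤ r)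
    (x : lp (fun _ : ι => 𝕜) p) (i : ι) : diagCLM p β hr hβ x i = β i * x i := rfl

theorem norm_diagCLM_le (β : ι → 𝕜) {r : ℝ} (hr : 0 ≤ r) (hβ : ∀ i, ‖β i‖ ≤ r) :
    ‖diagCLM p β hr hβ‖ ≤ r :=
  norm_mapCLM_le _ _ _ _

end lp

theorem norm_tsum_geometric_mul_le {R : Type*} [NormedRing R] [CompleteSpace R]
    (h1 : ‖(1 : R)‖ ≤ 1) {t d : R} {r : ℝ} (hr : 1 < r) (ht : ‖t‖ ≤ r⁻¹) (hd : ‖d‖ ≤ r⁻¹) :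
    ‖(∑' n, t ^ n) * d‖ ≤ (r - 1)⁻¹ := by
  have hlt : r⁻¹ < 1 := inv_lt_one_of_one_lt₀ hr
  have hsum : ‖∑' n, t ^ n‖ ≤ (1 - r⁻¹)⁻¹ := by
    have := inv_anti₀ (sub_pos.2 hlt) (sub_le_sub_left ht 1)
    linarith [tsum_geometric_le_of_norm_lt_one t (ht.trans_lt hlt)]
  calc ‖(∑' n, t ^ n) * d‖ ≤ (1 - r⁻¹)⁻¹ * r⁻¹ := norm_mul_le_of_le hsum hd
    _ = (r - 1)⁻¹ := by field_simp

-- Dividing the `k`-th equation of `(λ - A) x = z` by `λ - α k` turns it into `D z = (1 - D S) x`.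
theorem diagCLM_inv_sub_eq_iff {p : ℝ≥0∞} [Fact (1 ≤ p)] {α : ℤ → ℂ} {lam : ℂ}
    (hne : ∀ k, lam - α k ≠ 0) {r : ℝ} (hr : 0 ≤ r) (hβ : ∀ k, ‖(lam - α k)⁻¹‖ ≤ r)
    (x z : lp (fun _ : ℤ => ℂ) p) :
    lp.diagCLM p _ hr hβ z = (1 - lp.diagCLM p _ hr hβ * lp.shiftCLM ℂ ℂ p) x ↔
      ∀ k, z k = lam * x k - (x (k - 1) + α k * x k) := by
  simp only [lp.ext_iff, funext_iff]
  refine forall_congr' fun k => ?_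
  simp only [lp.diagCLM_apply, sub_apply, one_apply_eq_self, mul_apply_eq_comp,
    AddSubgroupClass.coe_sub, PreLp.sub_apply, lp.shiftCLM_apply]
  rw [inv_mul_eq_iff_eq_mul₀ (hne k), mul_sub, mul_inv_cancel_left₀ (hne k)]
  constructor <;> intro h <;> rw [h] <;> ring

theorem stmt_18_general (Ω : Set ℂ)
    (α : ℤ → ℂ) (hα : ∀ k : ℤ, α k ∈ Ω)
    (p : ℝ≥0∞) [Fact (1 ≤ p)]
    (lam : ℂ) (hlam : 1 < Metric.infDist lam Ω) :
    ∃ R : lp (fun _ : ℤ => ℂ) p →L[ℂ] lp (fun _ : ℤ => ℂ) p,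
      ‖R‖ ≤ (Metric.infDist lam Ω - 1)⁻¹ ∧
      (∀ x : lp (fun _ : ℤ => ℂ) p, ∀ k : ℤ,
        lam * R x k - (R x (k - 1) + α k * R x k) = x k) ∧
      (∀ x y : lp (fun _ : ℤ => ℂ) p,
        (∀ k : ℤ, y k = lam * x k - (x (k - 1) + α k * x k)) → R y = x) := by
  set r := Metric.infDist lam Ω
  have hr0 : 0 < r := one_pos.trans hlam
  have hdist : ∀ k, r ≤ ‖lam - α k‖ := fun k =>
    dist_eq_norm lam (α k) ▸ Metric.infDist_le_dist_of_mem (hα k)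
  have hne : ∀ k, lam - α k ≠ 0 := fun k => norm_pos_iff.1 (hr0.trans_le (hdist k))
  have hinv : ∀ k, ‖(lam - α k)⁻¹‖ ≤ r⁻¹ := fun k =>
    norm_inv (lam - α k) ▸ inv_anti₀ hr0 (hdist k)
  set D := lp.diagCLM p _ (inv_nonneg.2 hr0.le) hinv
  set S := lp.shiftCLM ℂ ℂ p
  have hD : ‖D‖ ≤ r⁻¹ := lp.norm_diagCLM_le _ _ _
  have hDS : ‖D * S‖ ≤ r⁻¹ := by simpa using norm_mul_le_of_le hD lp.norm_shiftCLM_le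
  have hDS1 : ‖D * S‖ < 1 := hDS.trans_lt (inv_lt_one_of_one_lt₀ hlam)
  have key := diagCLM_inv_sub_eq_iff (p := p) hne (inv_nonneg.2 hr0.le) hinv
  refine ⟨(∑' n, (D * S) ^ n) * D,
    norm_tsum_geometric_mul_le ContinuousLinearMap.norm_id_le hlam hDS hD, fun x k => ?_,
    fun x y hy => ?_⟩
  · have := (key _ x).1 <| by
      rw [← mul_apply_eq_comp, ← mul_assoc, mul_neg_geom_series _ hDS1, one_mul]
    linear_combination -(this k)
  · rw [mul_apply_eq_comp, (key x y).2 hy, ← mul_apply_eq_comp, geom_series_mul_neg _ hDS1,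
      one_apply_eq_self]

/-- for the modified robot rendezvous operator
`A(x_k) = (x_{k-1} + α_k x_k)` on `ℓ^p(ℤ;ℂ)` with `α_k ∈ Ω ⊆ {Re ≤ -1}`, every
`λ` with `dist(λ,Ω) > 1` is in the resolvent set, with
`‖(λ - A)⁻¹‖ ≤ (dist(λ,Ω) - 1)⁻¹`. -/
theorem stmt_18 (Ω : Set ℂ) (hΩne : Ω.Nonempty)
    (hΩ : Ω ⊆ {z : ℂ | z.re ≤ -1})
    (α : ℤ → ℂ) (hα : ∀ k : ℤ, α k ∈ Ω)
    (p : ℝ≥0∞) [Fact (1 ≤ p)]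
    (lam : ℂ) (hlam : 1 < Metric.infDist lam Ω) :
    ∃ R : lp (fun _ : ℤ => ℂ) p →L[ℂ] lp (fun _ : ℤ => ℂ) p,
      ‖R‖ ≤ (Metric.infDist lam Ω - 1)⁻¹ ∧
      (∀ x : lp (fun _ : ℤ => ℂ) p, ∀ k : ℤ,
        lam * R x k - (R x (k - 1) + α k * R x k) = x k) ∧
      (∀ x y : lp (fun _ : ℤ => ℂ) p,
        (∀ k : ℤ, y k = lam * x k - (x (k - 1) + α k * x k)) → R y = x) :=
  stmt_18_general Ω α hα p lam hlam
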